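/- arXiv:1404.2029 — 3 statements merged into one kernel-verified Lean document; each statement's English description precedes it below -/
import Mathlib

section
/- Let T be an ergodic measure-preserving automorphism of a probability space (X, F, μ) and let f : X → ℝ be integrable with ∫ f dμ = 0. Then for μ-almost every x ∈ X and every ε > 0, the Birkhoff sums S_n(x) = ∑_{k=0}^{n-1} f(T^k x) satisfy |S_n(x)| < ε for infinitely many n. -/
/-!
The set of points whose Birkhoff sums for `g - δ` are bounded above is invariant, so by ergodicity
it is null or conull; when `∫ g < δ`, Garsia's maximal ergodic theorem rules out the first case.
Hence the Birkhoff sums of a zero-mean function are `o(n)` almost everywhere.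

Let `B` be the set of points whose sums stay at distance `≥ q` from `0` from time `N` on. If
`Tᵏ x ∈ B` and `k' - k ≥ N`, then `|S_{k'} x - S_k x| ≥ q`. Hence, in each residue class mod `N`,
the times `k < n` with `Tᵏ x ∈ B` have `q`-separated sums of size `o(n)`, so the orbit of `x`
spends a vanishing proportion of time in `B`. That proportion integrates to `μ B`, and dominated
convergence gives `μ B = 0`.
-/

open MeasureTheory Filter Set Topology

section

variable {X : Type*} {T : X → X} {g : X → ℝ}

section Garsia

/-- `maxBirkhoffSum T g n x = max {birkhoffSum T g k x | k ≤ n}`. -/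
noncomputable def maxBirkhoffSum (T : X → X) (g : X → ℝ) : ℕ → X → ℝ
  | 0 => 0
  | n + 1 => fun x => max 0 (g x + maxBirkhoffSum T g n (T x))

theorem maxBirkhoffSum_succ (n : ℕ) (x : X) :
    maxBirkhoffSum T g (n + 1) x = max 0 (g x + maxBirkhoffSum T g n (T x)) := rfl

theorem maxBirkhoffSum_nonneg (n : ℕ) (x : X) : 0 ≤ maxBirkhoffSum T g n x := by
  cases n with
  | zero => exact le_rfl
  | succ n => exact le_max_left _ _

theorem maxBirkhoffSum_monotone (x : X) : Monotone fun n => maxBirkhoffSum T g n x := by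
  refine monotone_nat_of_le_succ fun n => ?_
  induction n generalizing x with
  | zero => exact maxBirkhoffSum_nonneg 1 x
  | succ n ih => exact max_le_max le_rfl (add_le_add le_rfl (ih (T x)))

theorem birkhoffSum_le_maxBirkhoffSum {k n : ℕ} (hkn : k ≤ n) (x : X) :
    birkhoffSum T g k x ≤ maxBirkhoffSum T g n x := by
  induction n generalizing k x with
  | zero => simp [Nat.le_zero.mp hkn, maxBirkhoffSum]
  | succ n ih =>
    cases k with
    | zero => exact (birkhoffSum_zero T g x).trans_le (maxBirkhoffSum_nonneg _ x)
    | succ k =>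
      rw [birkhoffSum_succ', maxBirkhoffSum_succ]
      exact le_max_of_le_right (add_le_add le_rfl (ih (Nat.le_of_succ_le_succ hkn) (T x)))

theorem exists_birkhoffSum_eq_maxBirkhoffSum (n : ℕ) (x : X) :
    ∃ k ≤ n, birkhoffSum T g k x = maxBirkhoffSum T g n x := by
  induction n generalizing x with
  | zero => exact ⟨0, le_rfl, rfl⟩
  | succ n ih =>
    rcases max_choice 0 (g x + maxBirkhoffSum T g n (T x)) with h | h <;>
      rw [maxBirkhoffSum_succ, h]
    · exact ⟨0, n.succ.zero_le, rfl⟩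
    · obtain ⟨k, hkn, hk⟩ := ih (T x)
      exact ⟨k + 1, Nat.succ_le_succ hkn, by rw [birkhoffSum_succ', hk]⟩

variable [MeasurableSpace X] {μ : Measure X}

theorem MeasureTheory.MeasurePreserving.integral_comp_of_aestronglyMeasurable
    (hT : MeasurePreserving T μ μ) {φ : X → ℝ} (hφ : AEStronglyMeasurable φ μ) :
    ∫ x, φ (T x) ∂μ = ∫ x, φ x ∂μ := by
  rw [← integral_map hT.aemeasurable (by rwa [hT.map_eq]), hT.map_eq]

theorem integrable_maxBirkhoffSum (hT : MeasurePreserving T μ μ) (hg : Integrable g μ) (n : ℕ) :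
    Integrable (maxBirkhoffSum T g n) μ := by
  induction n with
  | zero => exact integrable_zero X ℝ μ
  | succ n ih => exact (integrable_zero X ℝ μ).sup (hg.add (hT.integrable_comp_of_integrable ih))

/-- On `{0 < Mₙ₊₁}` we have `g = Mₙ₊₁ - Mₙ ∘ T`; off this set `Mₙ₊₁` vanishes, and `Mₙ ∘ T ≥ 0`
has the same integral as `Mₙ ≤ Mₙ₊₁`. -/
theorem setIntegral_pos_maxBirkhoffSum_nonneg (hT : MeasurePreserving T μ μ)
    (hg : Integrable g μ) (n : ℕ) : 0 ≤ ∫ x in {x | 0 < maxBirkhoffSum T g n x}, g x ∂μ := by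
  cases n with
  | zero => simp [maxBirkhoffSum]
  | succ n =>
    set M := maxBirkhoffSum T g
    set A := {x | 0 < M (n + 1) x}
    have hM := integrable_maxBirkhoffSum hT hg
    have hMT : Integrable (fun x => M n (T x)) μ := hT.integrable_comp_of_integrable (hM n)
    have hA : NullMeasurableSet A μ :=
      aestronglyMeasurable_const.nullMeasurableSet_lt (hM _).aestronglyMeasurable
    have hgA : EqOn (fun x => M (n + 1) x - M n (T x)) g A := fun x hx => by
      have hx : 0 < g x + M n (T x) := by simpa [A, M, maxBirkhoffSum_succ] using hx
      simp only [M, maxBirkhoffSum_succ, max_eq_right hx.le, add_sub_cancel_right]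
    calc 0 ≤ ∫ x, M (n + 1) x ∂μ - ∫ x, M n x ∂μ :=
          sub_nonneg.2 (integral_mono (hM n) (hM _) fun x => maxBirkhoffSum_monotone x n.le_succ)
      _ = ∫ x, M (n + 1) x ∂μ - ∫ x, M n (T x) ∂μ := by
          rw [hT.integral_comp_of_aestronglyMeasurable (hM n).aestronglyMeasurable]
      _ ≤ ∫ x in A, M (n + 1) x ∂μ - ∫ x in A, M n (T x) ∂μ := by
          rw [← setIntegral_eq_integral_of_forall_compl_eq_zero (s := A) (f := M (n + 1))
            fun x hx => le_antisymm (not_lt.1 hx) (maxBirkhoffSum_nonneg _ x)]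
          exact sub_le_sub_left
            (setIntegral_le_integral hMT (.of_forall fun x => maxBirkhoffSum_nonneg n (T x))) _
      _ = ∫ x in A, g x ∂μ := by
          rw [← integral_sub (hM _).integrableOn hMT.integrableOn, setIntegral_congr_fun₀ hA hgA]

theorem setIntegral_exists_pos_birkhoffSum_nonneg (hT : MeasurePreserving T μ μ)
    (hg : Integrable g μ) : 0 ≤ ∫ x in {x | ∃ n, 0 < birkhoffSum T g n x}, g x ∂μ := by
  have hunion : {x | ∃ n, 0 < birkhoffSum T g n x} = ⋃ n, {x | 0 < maxBirkhoffSum T g n x} := by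
    ext x
    simp only [mem_ofPred_eq, mem_iUnion]
    constructor
    · rintro ⟨n, hn⟩
      exact ⟨n, hn.trans_le (birkhoffSum_le_maxBirkhoffSum le_rfl x)⟩
    · rintro ⟨n, hn⟩
      obtain ⟨k, -, hk⟩ := exists_birkhoffSum_eq_maxBirkhoffSum (T := T) (g := g) n x
      exact ⟨k, hk ▸ hn⟩
  rw [hunion]
  refine ge_of_tendsto' (tendsto_setIntegral_of_monotone₀ (fun n => ?_) (fun m n hmn x hx => ?_)
    hg.integrableOn) (setIntegral_pos_maxBirkhoffSum_nonneg hT hg)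
  · exact aestronglyMeasurable_const.nullMeasurableSet_lt
      (integrable_maxBirkhoffSum hT hg n).aestronglyMeasurable
  · exact hx.trans_le (maxBirkhoffSum_monotone x hmn)

end Garsia

section Growth

theorem birkhoffSum_sub_const (T : X → X) (g : X → ℝ) (c : ℝ) (n : ℕ) (x : X) :
    birkhoffSum T (fun y => g y - c) n x = birkhoffSum T g n x - n * c := by
  simp [birkhoffSum, Finset.sum_sub_distrib, mul_comm]

theorem isLittleO_natCast_of_bddAbove {u : ℕ → ℝ}
    (h₁ : ∀ m : ℕ, BddAbove (range fun n => u n - n * (1 / (m + 1))))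
    (h₂ : ∀ m : ℕ, BddAbove (range fun n => -u n - n * (1 / (m + 1)))) :
    u =o[atTop] fun n => (n : ℝ) := by
  refine Asymptotics.isLittleO_iff.2 fun c hc => ?_
  obtain ⟨m, hm⟩ := exists_nat_one_div_lt hc
  obtain ⟨C₁, hC₁⟩ := h₁ m
  obtain ⟨C₂, hC₂⟩ := h₂ m
  filter_upwards [(tendsto_natCast_atTop_atTop.const_mul_atTop (sub_pos.2 hm)).eventually_ge_atTop
    (max C₁ C₂)] with n hn
  have hu₁ := hC₁ (mem_range_self n)
  have hu₂ := hC₂ (mem_range_self n)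
  rw [Real.norm_eq_abs, Real.norm_natCast, abs_le]
  constructor <;> nlinarith [le_max_left C₁ C₂, le_max_right C₁ C₂]

variable [MeasurableSpace X] {μ : Measure X}

theorem measurable_birkhoffSum (hT : Measurable T) (hg : Measurable g) (n : ℕ) :
    Measurable (birkhoffSum T g n) :=
  Finset.measurable_sum _ fun k _ => hg.comp (hT.iterate k)

theorem Ergodic.ae_bddAbove_birkhoffSum [IsFiniteMeasure μ] (hT : Ergodic T μ)
    (hg : Measurable g) (hgi : Integrable g μ) (hneg : ∫ x, g x ∂μ < 0) :
    ∀ᵐ x ∂μ, BddAbove (range fun n => birkhoffSum T g n x) := by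
  set E := {x | BddAbove (range fun n => birkhoffSum T g n x)}
  have hE : MeasurableSet E :=
    measurableSet_bddAbove_range (measurable_birkhoffSum hT.measurable hg)
  have hinv : E ⊆ T ⁻¹' E := by
    rintro x ⟨C, hC⟩
    refine ⟨C - g x, forall_mem_range.2 fun n => ?_⟩
    have := hC (mem_range_self (n + 1))
    rw [birkhoffSum_succ'] at this
    linarith
  rcases hT.ae_empty_or_univ_of_ae_le_preimage hE.nullMeasurableSet hinv.eventuallyLE with h | h
  · have hA : {x | ∃ n, 0 < birkhoffSum T g n x} =ᵐ[μ] univ := by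
      refine ae_eq_univ.2 (measure_mono_null (fun x hx => ?_) (ae_eq_empty.1 h))
      exact ⟨0, forall_mem_range.2 fun n => not_lt.1 fun hn => hx ⟨n, hn⟩⟩
    have := setIntegral_exists_pos_birkhoffSum_nonneg hT.toMeasurePreserving hgi
    rw [setIntegral_congr_set hA, setIntegral_univ] at this
    exact absurd this hneg.not_ge
  · exact ae_iff.2 (ae_eq_univ.1 h)

theorem Ergodic.ae_isLittleO_birkhoffSum [IsProbabilityMeasure μ] (hT : Ergodic T μ)
    (hg : Measurable g) (hgi : Integrable g μ) (hmean : ∫ x, g x ∂μ = 0) :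
    ∀ᵐ x ∂μ, (fun n => birkhoffSum T g n x) =o[atTop] fun n => (n : ℝ) := by
  have hbdd (φ : X → ℝ) (hφ : Measurable φ) (hφi : Integrable φ μ) (hφ0 : ∫ x, φ x ∂μ = 0) :
      ∀ᵐ x ∂μ, ∀ m : ℕ, BddAbove (range fun n => birkhoffSum T φ n x - n * (1 / (m + 1))) := by
    refine ae_all_iff.2 fun m => ?_
    have hneg : ∫ x, φ x - 1 / (m + 1) ∂μ < 0 := by
      rw [integral_sub hφi (integrable_const _), hφ0, integral_const]
      simp only [probReal_univ, one_smul, zero_sub, Left.neg_neg_iff]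
      positivity
    simpa only [birkhoffSum_sub_const] using
      hT.ae_bddAbove_birkhoffSum (hφ.sub_const _) (hφi.sub (integrable_const _)) hneg
  filter_upwards [hbdd g hg hgi hmean, hbdd (-g) hg.neg hgi.neg (by simp [integral_neg, hmean])]
    with x h₁ h₂
  exact isLittleO_natCast_of_bddAbove h₁ (by simpa only [birkhoffSum_neg] using h₂)

end Growth

section Counting

theorem abs_sub_lt_of_natFloor_div_eq {a b q : ℝ} (ha : 0 ≤ a) (hb : 0 ≤ b) (hq : 0 < q)
    (h : ⌊a / q⌋₊ = ⌊b / q⌋₊) : |a - b| < q := by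
  have := Int.abs_sub_lt_one_of_floor_eq_floor (a := a / q) (b := b / q) (by
    rw [← Int.natCast_floor_eq_floor (by positivity), ← Int.natCast_floor_eq_floor (by positivity),
      h])
  rwa [← sub_div, abs_div, abs_of_pos hq, div_lt_one hq] at this

theorem card_le_of_separated {s : ℕ → ℝ} {F : Finset ℕ} {N : ℕ} {q R : ℝ} (hN : 0 < N)
    (hq : 0 < q) (hR : 0 ≤ R) (hs : ∀ k ∈ F, |s k| ≤ R)
    (hsep : ∀ k ∈ F, ∀ k' ∈ F, k < k' → N ≤ k' - k → q ≤ |s k' - s k|) :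
    (F.card : ℝ) ≤ N * (2 * R / q + 1) := by
  -- `k ↦ (k % N, cell k)` is injective on `F`, where `cell k` locates `s k` in `[-R, R]` up to `q`
  set cell : ℕ → ℕ := fun k => ⌊(s k + R) / q⌋₊
  have hshift : ∀ k ∈ F, 0 ≤ s k + R := fun k hk => by linarith [neg_abs_le (s k), hs k hk]
  have hsame : ∀ k ∈ F, ∀ k' ∈ F, k < k' → k % N = k' % N → cell k ≠ cell k' := by
    intro k hk k' hk' hlt hmod heq
    have hdvd : N ∣ k' - k := (Nat.modEq_iff_dvd' hlt.le).1 hmod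
    have hfar := hsep k hk k' hk' hlt (Nat.le_of_dvd (Nat.sub_pos_of_lt hlt) hdvd)
    have hclose := abs_sub_lt_of_natFloor_div_eq (hshift k' hk') (hshift k hk) hq heq.symm
    rw [add_sub_add_right_eq_sub] at hclose
    exact hfar.not_gt hclose
  have hinj : Set.InjOn (fun k => (k % N, cell k)) F := by
    intro k hk k' hk' h
    simp only [Prod.mk.injEq] at h
    by_contra hne
    rcases lt_or_gt_of_ne hne with hlt | hlt
    · exact hsame k hk k' hk' hlt h.1 h.2
    · exact hsame k' hk' k hk hlt h.1.symm h.2.symm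
  have hmaps : Set.MapsTo (fun k => (k % N, cell k)) F
      ↑(Finset.range N ×ˢ Finset.range (⌊2 * R / q⌋₊ + 1)) := fun k hk => by
    simp only [Finset.coe_product, Finset.coe_range, mem_prod, mem_Iio]
    refine ⟨Nat.mod_lt _ hN, Nat.lt_succ_of_le (Nat.floor_le_floor ?_)⟩
    gcongr
    linarith [(abs_le.1 (hs k hk)).2]
  have hcard := Finset.card_le_card_of_injOn _ hmaps hinj
  rw [Finset.card_product, Finset.card_range, Finset.card_range] at hcard
  calc (F.card : ℝ) ≤ N * (⌊2 * R / q⌋₊ + 1 : ℕ) := by exact_mod_cast hcard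
    _ ≤ N * (2 * R / q + 1) := by
      push_cast
      gcongr
      exact Nat.floor_le (by positivity)

theorem isLittleO_partialSups_norm {E : Type*} [SeminormedAddGroup E] {u : ℕ → E}
    (hu : u =o[atTop] fun n => (n : ℝ)) :
    (fun n => partialSups (fun k => ‖u k‖) n) =o[atTop] fun n => (n : ℝ) := by
  refine Asymptotics.isLittleO_iff.2 fun c hc => ?_
  obtain ⟨K, hK⟩ := eventually_atTop.1 (Asymptotics.isLittleO_iff.1 hu hc)
  filter_upwards [eventually_ge_atTop K, (tendsto_natCast_atTop_atTop.const_mul_atTop hc)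
    |>.eventually_ge_atTop (partialSups (fun k => ‖u k‖) K)] with n hKn hn
  have h0 : 0 ≤ partialSups (fun k => ‖u k‖) n :=
    (norm_nonneg _).trans (le_partialSups_of_le (fun k => ‖u k‖) (Nat.zero_le n))
  rw [Real.norm_of_nonneg h0, Real.norm_natCast]
  refine partialSups_le _ _ _ fun j hj => ?_
  rcases le_total j K with hjK | hKj
  · exact (le_partialSups_of_le (fun k => ‖u k‖) hjK).trans hn
  · exact (hK j hKj).trans (by rw [Real.norm_natCast]; gcongr)

theorem birkhoffSum_indicator_one (B : Set X) [DecidablePred (· ∈ B)] (n : ℕ) (x : X) :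
    birkhoffSum T (B.indicator (1 : X → ℝ)) n x =
      ((Finset.range n).filter fun k => T^[k] x ∈ B).card := by
  simp [birkhoffSum, indicator_apply]

theorem birkhoffAverage_indicator_one_mem_Icc (B : Set X) (n : ℕ) (x : X) :
    birkhoffAverage ℝ T (B.indicator (1 : X → ℝ)) n x ∈ Icc 0 1 := by
  classical
  rw [birkhoffAverage, birkhoffSum_indicator_one, smul_eq_mul, inv_mul_eq_div]
  refine ⟨by positivity, div_le_one_of_le₀ ?_ n.cast_nonneg⟩
  exact_mod_cast (Finset.card_filter_le _ _).trans (Finset.card_range n).le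

theorem birkhoffSum_indicator_one_le {B : Set X} {N : ℕ} {q : ℝ} (hN : 0 < N) (hq : 0 < q)
    (hB : ∀ y ∈ B, ∀ m, N ≤ m → q ≤ |birkhoffSum T g m y|) (n : ℕ) (x : X) :
    birkhoffSum T (B.indicator (1 : X → ℝ)) n x ≤
      N * (2 * partialSups (fun k => ‖birkhoffSum T g k x‖) n / q + 1) := by
  classical
  rw [birkhoffSum_indicator_one]
  refine card_le_of_separated (s := fun k => birkhoffSum T g k x) hN hq
    ((norm_nonneg _).trans (le_partialSups_of_le (fun k => ‖birkhoffSum T g k x‖) (Nat.zero_le n)))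
    (fun k hk => ?_) (fun k hk k' hk' hlt hkk' => ?_)
  · rw [← Real.norm_eq_abs]
    exact le_partialSups_of_le (fun k => ‖birkhoffSum T g k x‖)
      (Finset.mem_range.1 (Finset.mem_filter.1 hk).1).le
  · have := birkhoffSum_add T g k (k' - k) x
    rw [Nat.add_sub_cancel' hlt.le] at this
    rw [this, add_sub_cancel_left]
    exact hB _ (Finset.mem_filter.1 hk).2 _ hkk'

theorem tendsto_birkhoffAverage_indicator_one {B : Set X} {N : ℕ} {q : ℝ} (hN : 0 < N)
    (hq : 0 < q) (hB : ∀ y ∈ B, ∀ m, N ≤ m → q ≤ |birkhoffSum T g m y|) {x : X}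
    (hx : (fun n => birkhoffSum T g n x) =o[atTop] fun n => (n : ℝ)) :
    Tendsto (fun n => birkhoffAverage ℝ T (B.indicator (1 : X → ℝ)) n x) atTop (𝓝 0) := by
  have hbound : (fun n => N * (2 * partialSups (fun k => ‖birkhoffSum T g k x‖) n / q + 1))
      =o[atTop] fun n => (n : ℝ) := by
    refine ((((isLittleO_partialSups_norm hx).const_mul_left (2 / q)).add
      ((Asymptotics.isLittleO_one_left_iff ℝ).2 ?_)).const_mul_left (N : ℝ)).congr_left
      fun n => by ring
    simpa only [Real.norm_natCast] using tendsto_natCast_atTop_atTop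
  refine tendsto_of_tendsto_of_tendsto_of_le_of_le tendsto_const_nhds
    hbound.tendsto_div_nhds_zero (fun n => (birkhoffAverage_indicator_one_mem_Icc B n x).1)
    (fun n => ?_)
  rw [birkhoffAverage, smul_eq_mul, inv_mul_eq_div]
  exact div_le_div_of_nonneg_right (birkhoffSum_indicator_one_le hN hq hB n x) n.cast_nonneg

end Counting

section Recurrence

variable [MeasurableSpace X] {μ : Measure X}

theorem MeasureTheory.MeasurePreserving.integral_birkhoffSum (hT : MeasurePreserving T μ μ)
    (hg : Integrable g μ) (n : ℕ) : ∫ x, birkhoffSum T g n x ∂μ = n * ∫ x, g x ∂μ := by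
  unfold birkhoffSum
  rw [integral_finsetSum (f := fun k x => g (T^[k] x)) _
    fun k _ => (hT.iterate k).integrable_comp_of_integrable hg]
  simp [(hT.iterate _).integral_comp_of_aestronglyMeasurable hg.aestronglyMeasurable]

theorem MeasureTheory.MeasurePreserving.integral_birkhoffAverage (hT : MeasurePreserving T μ μ)
    (hg : Integrable g μ) {n : ℕ} (hn : n ≠ 0) :
    ∫ x, birkhoffAverage ℝ T g n x ∂μ = ∫ x, g x ∂μ := by
  simp only [birkhoffAverage, smul_eq_mul]
  rw [integral_const_mul, hT.integral_birkhoffSum hg, inv_mul_cancel_left₀ (Nat.cast_ne_zero.2 hn)]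

/-- The averages of `1_B` along orbits integrate to `μ B` and tend to `0` almost everywhere. -/
theorem MeasureTheory.MeasurePreserving.measure_setOf_forall_le_abs_birkhoffSum_eq_zero
    [IsFiniteMeasure μ] (hT : MeasurePreserving T μ μ) (hg : Measurable g)
    (ho : ∀ᵐ x ∂μ, (fun n => birkhoffSum T g n x) =o[atTop] fun n => (n : ℝ))
    {N : ℕ} (hN : 0 < N) {q : ℝ} (hq : 0 < q) :
    μ {x | ∀ n, N ≤ n → q ≤ |birkhoffSum T g n x|} = 0 := by
  set B := {x | ∀ n, N ≤ n → q ≤ |birkhoffSum T g n x|}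
  have hB : MeasurableSet B := by
    simp only [B, ofPred_forall]
    exact .iInter fun n => .iInter fun _ =>
      measurableSet_le measurable_const (measurable_birkhoffSum hT.measurable hg n).abs
  have hφ : Integrable (B.indicator (1 : X → ℝ)) μ := (integrable_const 1).indicator hB
  have hint : ∀ᶠ n in atTop,
      ∫ x, birkhoffAverage ℝ T (B.indicator (1 : X → ℝ)) n x ∂μ = μ.real B :=
    (eventually_ne_atTop 0).mono fun n hn => by
      rw [hT.integral_birkhoffAverage hφ hn, integral_indicator_one hB]
  have hlim := tendsto_integral_of_dominated_convergence (fun _ => 1) (fun n => ?_)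
    (integrable_const 1) (fun n => .of_forall fun x => ?_)
    (ho.mono fun x hx => tendsto_birkhoffAverage_indicator_one hN hq (fun y hy => hy) hx)
  · rw [integral_zero] at hlim
    exact (measureReal_eq_zero_iff).1
      (tendsto_nhds_unique (tendsto_const_nhds.congr' (EventuallyEq.symm hint)) hlim)
  · exact ((measurable_birkhoffSum hT.measurable (measurable_const.indicator hB) n).const_smul
      (n : ℝ)⁻¹).aestronglyMeasurable
  · obtain ⟨h0, h1⟩ := birkhoffAverage_indicator_one_mem_Icc (T := T) B n x
    exact (Real.norm_of_nonneg h0).trans_le h1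

theorem Ergodic.ae_frequently_abs_birkhoffSum_lt [IsProbabilityMeasure μ] (hT : Ergodic T μ)
    (hg : Measurable g) (hgi : Integrable g μ) (hmean : ∫ x, g x ∂μ = 0) :
    ∀ᵐ x ∂μ, ∀ ε > (0 : ℝ), ∃ᶠ n in atTop, |birkhoffSum T g n x| < ε := by
  have hnull (j N : ℕ) :
      ∀ᵐ x ∂μ, ¬∀ n, N + 1 ≤ n → 1 / (j + 1 : ℝ) ≤ |birkhoffSum T g n x| :=
    measure_eq_zero_iff_ae_notMem.1 <|
      hT.toMeasurePreserving.measure_setOf_forall_le_abs_birkhoffSum_eq_zero hg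
        (hT.ae_isLittleO_birkhoffSum hg hgi hmean) N.succ_pos Nat.one_div_pos_of_nat
  filter_upwards [ae_all_iff.2 fun j => ae_all_iff.2 (hnull j)] with x hx ε hε
  obtain ⟨j, hj⟩ := exists_nat_one_div_lt hε
  refine frequently_atTop.2 fun N => ?_
  obtain ⟨n, hn, hlt⟩ := not_forall₂.1 (hx j N)
  exact ⟨n, N.le_succ.trans hn, (not_le.1 hlt).trans hj⟩

end Recurrence

end

/-- **Atkinson's theorem.** If `T` is an ergodic measure-preserving automorphism of a
probability space and `f` is integrable with zero mean, then for a.e. `x` the Birkhoff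
sums return arbitrarily close to zero infinitely often. -/
theorem atkinson_recurrence {X : Type*} [MeasurableSpace X] {μ : Measure X}
    [IsProbabilityMeasure μ] (T : X ≃ᵐ X) (hT : Ergodic T μ)
    (f : X → ℝ) (hf : Integrable f μ) (hmean : ∫ x, f x ∂μ = 0) :
    ∀ᵐ x ∂μ, ∀ ε > (0 : ℝ),
      ∃ᶠ n in atTop, |∑ k ∈ Finset.range n, f ((T : X → X)^[k] x)| < ε := by
  have hfg : f =ᵐ[μ] hf.1.mk f := hf.1.ae_eq_mk
  have hsum : ∀ᵐ x ∂μ, ∀ n, birkhoffSum T f n x = birkhoffSum T (hf.1.mk f) n x :=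
    ae_all_iff.2 (hT.toMeasurePreserving.quasiMeasurePreserving.birkhoffSum_ae_eq_of_ae_eq hfg)
  filter_upwards [hsum, hT.ae_frequently_abs_birkhoffSum_lt hf.1.stronglyMeasurable_mk.measurable
    (hf.congr hfg) (by rwa [← integral_congr_ae hfg])] with x hxf hx ε hε
  exact (hx ε hε).mono fun n hn => by rwa [← hxf n] at hn
end

section
/- Let T be an ergodic measure-preserving transformation of a probability space (X, F, μ), and let (f_n)_{n≥1} be integrable functions X → ℝ satisfying the subadditivity relation f_{n+m}(x) ≤ f_n(T^m x) + f_m(x) for μ-a.e. x and all n, m ≥ 1. If lim_{n→∞} f_n(x) = −∞ for μ-a.e. x, then lim_{n→∞} (1/n) ∫ f_n dμ < 0. -/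
/-!
Fix `N` such that the set `A` of points where `f m ≤ -1` for every `m ≥ N` has positive
measure. Along an orbit, wait for the first visit to `A`, then jump from each visit to the first
visit at least `N` steps later: by subadditivity every jump contributes at most `-1`, and there is
a jump for every `N` visits. Before the first visit and during the last `N` steps, `f` is bounded
by the sum of `(f 1)⁺` along the orbit. After integration the jumps give `-n μ(A) / N`, the last
`N` steps give `O(1)` and the steps before the first visit give `o(n)`: by ergodicity almost every
orbit enters `A`, and the functions `(f 1)⁺ ∘ T^[j]` are uniformly integrable.
-/

open MeasureTheory Filter Finset
open scoped Topology

section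

variable {X : Type*} [MeasurableSpace X] {μ : Measure X}

namespace MeasureTheory.MeasurePreserving

variable {Y : Type*} [MeasurableSpace Y] {ν : Measure Y}

theorem integral_comp_of_aestronglyMeasurable_s1 {φ : X → Y} (hφ : MeasurePreserving φ μ ν)
    {w : Y → ℝ} (hw : AEStronglyMeasurable w ν) :
    ∫ x, w (φ x) ∂μ = ∫ y, w y ∂ν := by
  rw [← hφ.map_eq] at hw ⊢
  exact (integral_map hφ.measurable.aemeasurable hw).symm

theorem integrable_birkhoffSum {T : X → X} (hT : MeasurePreserving T μ μ) {w : X → ℝ}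
    (hw : Integrable w μ) (n : ℕ) : Integrable (birkhoffSum T w n) μ := by
  unfold birkhoffSum
  exact integrable_finsetSum _ fun k _ => (hT.iterate k).integrable_comp_of_integrable hw

theorem integral_birkhoffSum_s1 {T : X → X} (hT : MeasurePreserving T μ μ) {w : X → ℝ}
    (hw : Integrable w μ) (n : ℕ) : ∫ x, birkhoffSum T w n x ∂μ = n * ∫ x, w x ∂μ := by
  simp only [birkhoffSum]
  rw [integral_finsetSum _ fun k _ => by
    exact (hT.iterate k).integrable_comp_of_integrable hw]
  simp [(hT.iterate _).integral_comp_of_aestronglyMeasurable_s1 hw.1]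

theorem setIntegral_comp_le [IsFiniteMeasure μ] {φ : X → Y} (hφ : MeasurePreserving φ μ ν)
    {w : Y → ℝ} (hw : Integrable w ν) (s : Set X) (L : ℝ) :
    ∫ x in s, w (φ x) ∂μ ≤ L * μ.real s + ∫ y, max (w y - L) 0 ∂ν := by
  have hwφ : Integrable (fun x => w (φ x)) μ := hφ.integrable_comp_of_integrable hw
  have hexcess : Integrable (fun x => max (w (φ x) - L) 0) μ :=
    (hwφ.sub (integrable_const L)).pos_part
  calc ∫ x in s, w (φ x) ∂μ ≤ ∫ x in s, (L + max (w (φ x) - L) 0) ∂μ :=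
        setIntegral_mono hwφ.integrableOn ((integrable_const L).add hexcess).integrableOn
          fun x => by linarith [le_max_left (w (φ x) - L) 0]
    _ = L * μ.real s + ∫ x in s, max (w (φ x) - L) 0 ∂μ := by
        rw [integral_add (integrable_const L).integrableOn hexcess.integrableOn,
          setIntegral_const, smul_eq_mul, mul_comm]
    _ ≤ L * μ.real s + ∫ x, max (w (φ x) - L) 0 ∂μ := by
        have : (0 : X → ℝ) ≤ᵐ[μ] fun x => max (w (φ x) - L) 0 :=
          ae_of_all _ fun x => le_max_right _ _
        linarith [setIntegral_le_integral (s := s) hexcess this]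
    _ = L * μ.real s + ∫ y, max (w y - L) 0 ∂ν := by
        rw [hφ.integral_comp_of_aestronglyMeasurable_s1
          ((hw.aemeasurable.sub_const L).max aemeasurable_const).aestronglyMeasurable]

end MeasureTheory.MeasurePreserving

theorem MeasureTheory.Integrable.tendsto_integral_max_sub_atTop {w : X → ℝ}
    (hw : Integrable w μ) : Tendsto (fun L : ℝ => ∫ x, max (w x - L) 0 ∂μ) atTop (𝓝 0) := by
  have := tendsto_integral_filter_of_dominated_convergence (l := atTop) (μ := μ)
    (F := fun (L : ℝ) x => max (w x - L) 0) (f := 0) (fun x => |w x|)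
    (Eventually.of_forall fun L =>
      ((hw.aemeasurable.sub_const L).max aemeasurable_const).aestronglyMeasurable)
    ((eventually_ge_atTop 0).mono fun L hL => Eventually.of_forall fun x => by
      rw [Real.norm_eq_abs, abs_of_nonneg (le_max_right _ _)]
      exact max_le (by linarith [le_abs_self (w x)]) (abs_nonneg _))
    hw.abs
    (Eventually.of_forall fun x => tendsto_const_nhds.congr'
      ((eventually_ge_atTop (w x)).mono fun L hL => (max_eq_right (by linarith)).symm))
  simpa using this

theorem MeasureTheory.MeasurePreserving.tendsto_setIntegral_comp_iterate [IsFiniteMeasure μ]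
    {T : X → X} (hT : MeasurePreserving T μ μ) {w : X → ℝ} (hw : Integrable w μ)
    (hw0 : ∀ x, 0 ≤ w x)
    {s : ℕ → Set X} (hs : Tendsto (fun j => μ (s j)) atTop (𝓝 0)) :
    Tendsto (fun j => ∫ x in s j, w (T^[j] x) ∂μ) atTop (𝓝 0) := by
  refine tendsto_order.2 ⟨fun ε hε => Eventually.of_forall fun j =>
    hε.trans_le (integral_nonneg fun x => hw0 _), fun ε hε => ?_⟩
  obtain ⟨L, hL⟩ := (hw.tendsto_integral_max_sub_atTop.eventually
    (gt_mem_nhds (half_pos hε))).exists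
  have hmeas : Tendsto (fun j => L * μ.real (s j)) atTop (𝓝 (L * 0)) :=
    ((ENNReal.tendsto_toReal ENNReal.zero_ne_top).comp hs).const_mul L
  rw [mul_zero] at hmeas
  filter_upwards [hmeas.eventually (gt_mem_nhds (half_pos hε))] with j hj
  linarith [(hT.iterate j).setIntegral_comp_le hw (s j) L]

theorem Ergodic.ae_exists_iterate_mem [IsFiniteMeasure μ] {T : X → X} (hT : Ergodic T μ)
    {A : Set X} (hA : MeasurableSet A) (hA0 : μ A ≠ 0) : ∀ᵐ x ∂μ, ∃ p, T^[p] x ∈ A := by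
  set U := ⋃ p, T^[p] ⁻¹' A
  have hU : MeasurableSet U := MeasurableSet.iUnion fun p => hT.measurable.iterate p hA
  have hTU : T ⁻¹' U ⊆ U := fun x hx => by
    obtain ⟨p, hp⟩ := Set.mem_iUnion.1 hx
    exact Set.mem_iUnion.2 ⟨p + 1, by simpa [Function.iterate_succ_apply] using hp⟩
  rcases hT.ae_empty_or_univ_of_preimage_ae_le hU.nullMeasurableSet hTU.eventuallyLE with h | h
  · exact absurd (measure_mono_null (Set.subset_iUnion_of_subset 0 subset_rfl)
      (ae_eq_empty.1 h)) hA0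
  · filter_upwards [h.mem_iff] with x hx
    exact Set.mem_iUnion.1 (hx.2 trivial)

namespace ClimenhagaMorris

section Blocks

/- `a ℓ p` stands for the value `f ℓ (T^[p] x)` on the block `[p, p + ℓ)` of a fixed orbit. -/
variable {a : ℕ → ℕ → ℝ}

theorem block_le_sum_Ico (hsub : ∀ p n m, a (n + m) p ≤ a n (p + m) + a m p)
    (hzero : ∀ p, a 0 p ≤ 0) (p ℓ : ℕ) :
    a ℓ p ≤ ∑ j ∈ Ico p (p + ℓ), max (a 1 j) 0 := by
  induction ℓ with
  | zero => simpa using hzero p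
  | succ ℓ ih =>
    rw [← add_assoc, sum_Ico_succ_top (Nat.le_add_right p ℓ), add_comm ℓ 1]
    linarith [hsub p 1 ℓ, le_max_left (a 1 (p + ℓ)) 0]

theorem card_filter_Ico_le_add {v : ℕ → Prop} [DecidablePred v] {p q n N : ℕ}
    (hgap : ∀ j ∈ Ico (p + N) q, ¬ v j) :
    #{j ∈ Ico p n | v j} ≤ N + #{j ∈ Ico q n | v j} := by
  calc #{j ∈ Ico p n | v j} ≤ #(Ico p (p + N) ∪ {j ∈ Ico q n | v j}) := by
        refine card_le_card fun j hj => ?_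
        simp only [mem_filter, mem_Ico, mem_union] at hj hgap ⊢
        rcases lt_or_ge j (p + N) with hjN | hjN
        · exact Or.inl ⟨hj.1.1, hjN⟩
        · exact Or.inr ⟨⟨not_lt.1 fun hjq => hgap j ⟨hjN, hjq⟩ hj.2, hj.1.2⟩, hj.2⟩
    _ ≤ N + #{j ∈ Ico q n | v j} := by
        simpa using card_union_le (Ico p (p + N)) {j ∈ Ico q n | v j}

theorem block_le_of_visit (hsub : ∀ p n m, a (n + m) p ≤ a n (p + m) + a m p)
    (hzero : ∀ p, a 0 p ≤ 0) {v : ℕ → Prop} [DecidablePred v] {N : ℕ} (hN : 0 < N)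
    (hv : ∀ p, v p → ∀ m, N ≤ m → a m p ≤ -1) {n p : ℕ} (hp : v p) (hpn : p ≤ n) :
    a (n - p) p ≤
      1 - #{j ∈ Ico p n | v j} / N + ∑ j ∈ Ico (n - N) n, max (a 1 j) 0 := by
  set tail := ∑ j ∈ Ico (n - N) n, max (a 1 j) 0
  have htail : 0 ≤ tail := sum_nonneg fun _ _ => le_max_right _ _
  have hNpos : (0 : ℝ) < N := by exact_mod_cast hN
  induction hk : n - p using Nat.strong_induction_on generalizing p with
  | _ k ih =>
  subst hk
  by_cases hshort : n - p < N
  · have hblock : a (n - p) p ≤ tail := by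
      refine (block_le_sum_Ico hsub hzero p (n - p)).trans
        (sum_le_sum_of_subset_of_nonneg (Ico_subset_Ico (by omega) (by omega))
          fun _ _ _ => le_max_right _ _)
    have hcount : (#{j ∈ Ico p n | v j} : ℝ) ≤ N := by
      have := (card_filter_le (Ico p n) v).trans_eq (Nat.card_Ico p n)
      exact_mod_cast this.trans hshort.le
    have : (#{j ∈ Ico p n | v j} : ℝ) / N ≤ 1 := (div_le_one hNpos).2 hcount
    linarith
  -- `q` is the first visit at least `N` steps after `p`, or `n` if there is none.
  have hex : ∃ q, p + N ≤ q ∧ (q = n ∨ v q) := ⟨n, by omega, Or.inl rfl⟩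
  set q := Nat.find hex
  obtain ⟨hpq, hq⟩ : p + N ≤ q ∧ (q = n ∨ v q) := Nat.find_spec hex
  have hqn : q ≤ n := Nat.find_min' hex ⟨by omega, Or.inl rfl⟩
  have hgap : ∀ j ∈ Ico (p + N) q, ¬ v j := fun j hj hvj =>
    Nat.find_min hex (mem_Ico.1 hj).2 ⟨(mem_Ico.1 hj).1, Or.inr hvj⟩
  have hfirst : a (q - p) p ≤ -1 := hv p hp _ (by omega)
  have hrest : a (n - q) q ≤ 1 - #{j ∈ Ico q n | v j} / N + tail := by
    rcases hq with hq | hq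
    · simp only [hq, tsub_self, Ico_self, filter_empty, card_empty, Nat.cast_zero, zero_div,
        sub_zero]
      linarith [hzero n]
    · exact ih (n - q) (by omega) hq hqn rfl
  have hsplit : a (n - p) p ≤ a (n - q) q + a (q - p) p := by
    have := hsub p (n - q) (q - p)
    rwa [show n - q + (q - p) = n - p by omega, show p + (q - p) = q by omega] at this
  have hcount : (#{j ∈ Ico p n | v j} : ℝ) ≤ N + #{j ∈ Ico q n | v j} := by
    exact_mod_cast card_filter_Ico_le_add hgap
  have : (#{j ∈ Ico p n | v j} : ℝ) / N ≤ 1 + #{j ∈ Ico q n | v j} / N := by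
    rw [div_le_iff₀ hNpos, add_mul, div_mul_cancel₀ _ hNpos.ne']
    linarith
  linarith

theorem block_zero_le (hsub : ∀ p n m, a (n + m) p ≤ a n (p + m) + a m p)
    (hzero : ∀ p, a 0 p ≤ 0) {v : ℕ → Prop} [DecidablePred v] {N : ℕ} (hN : 0 < N)
    (hv : ∀ p, v p → ∀ m, N ≤ m → a m p ≤ -1) (n : ℕ) :
    a n 0 ≤ ∑ j ∈ range n, (if ∀ i ≤ j, ¬ v i then max (a 1 j) 0 else 0) +
      (1 - #{j ∈ range n | v j} / N + ∑ j ∈ Ico (n - N) n, max (a 1 j) 0) := by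
  have hnonneg : ∀ j, 0 ≤ (if ∀ i ≤ j, ¬ v i then max (a 1 j) 0 else 0) := fun j => by
    split_ifs <;> simp
  by_cases hvisit : ∃ p, p < n ∧ v p
  · set p := Nat.find hvisit
    obtain ⟨hpn, hp⟩ : p < n ∧ v p := Nat.find_spec hvisit
    have hbefore : ∀ j < p, ¬ v j := fun j hj hvj => Nat.find_min hvisit hj ⟨by omega, hvj⟩
    have hinit : a p 0 ≤ ∑ j ∈ range n, (if ∀ i ≤ j, ¬ v i then max (a 1 j) 0 else 0) :=
      calc a p 0 ≤ ∑ j ∈ range p, max (a 1 j) 0 := by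
            simpa using block_le_sum_Ico hsub hzero 0 p
        _ = ∑ j ∈ range p, (if ∀ i ≤ j, ¬ v i then max (a 1 j) 0 else 0) :=
            sum_congr rfl fun j hj => by
              rw [if_pos fun i hi => hbefore i (by simp at hj; omega)]
        _ ≤ _ := sum_le_sum_of_subset_of_nonneg (range_subset_range.2 hpn.le)
            fun j _ _ => hnonneg j
    have hcount : (#{j ∈ range n | v j} : ℝ) ≤ #{j ∈ Ico p n | v j} := by
      refine Nat.cast_le.2 (card_le_card fun j hj => ?_)
      simp only [mem_filter, mem_range, mem_Ico] at hj ⊢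
      exact ⟨⟨not_lt.1 fun hjp => hbefore j hjp hj.2, hj.1⟩, hj.2⟩
    have hsplit : a n 0 ≤ a (n - p) p + a p 0 := by
      simpa [show n - p + p = n by omega] using hsub 0 (n - p) p
    have := block_le_of_visit hsub hzero hN hv hp hpn.le
    have : (#{j ∈ range n | v j} : ℝ) / N ≤ #{j ∈ Ico p n | v j} / N := by gcongr
    linarith
  · push Not at hvisit
    have hinit : a n 0 ≤ ∑ j ∈ range n, (if ∀ i ≤ j, ¬ v i then max (a 1 j) 0 else 0) := by
      have := block_le_sum_Ico hsub hzero 0 n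
      rw [zero_add, ← range_eq_Ico] at this
      refine this.trans_eq (sum_congr rfl fun j hj => ?_)
      rw [if_pos fun i hi => hvisit i (by simp at hj; omega)]
    have hcount : #{j ∈ range n | v j} = 0 :=
      card_eq_zero.2 (filter_eq_empty_iff.2 fun j hj => hvisit j (mem_range.1 hj))
    have htail : 0 ≤ ∑ j ∈ Ico (n - N) n, max (a 1 j) 0 := sum_nonneg fun _ _ => le_max_right _ _
    rw [hcount]
    simp only [Nat.cast_zero, zero_div, sub_zero]
    linarith

end Blocks

variable {T : X → X} {g : ℕ → X → ℝ}

theorem exists_measurableSet_forall_le_neg_one [NeZero μ]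
    (hg : ∀ n, AEStronglyMeasurable (g n) μ)
    (hdiv : ∀ᵐ x ∂μ, Tendsto (fun n => g n x) atTop atBot) :
    ∃ N, 0 < N ∧ ∃ A, MeasurableSet A ∧ μ A ≠ 0 ∧ ∀ x ∈ A, ∀ m, N ≤ m → g m x ≤ -1 := by
  set B : ℕ → Set X := fun N => {x | ∀ m, N ≤ m → g m x ≤ -1}
  have hB : ∀ N, NullMeasurableSet (B N) μ := fun N => by
    simp only [B, Set.ofPred_forall]
    exact .iInter fun m => .iInter fun _ =>
      nullMeasurableSet_le (hg m).aemeasurable aemeasurable_const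
  have hcover : μ (⋃ N, B N)ᶜ = 0 := by
    refine ae_iff.1 (hdiv.mono fun x hx => ?_)
    obtain ⟨N, hN⟩ := eventually_atTop.1 (hx.eventually_le_atBot (-1))
    exact Set.mem_iUnion.2 ⟨N, hN⟩
  obtain ⟨N, hN⟩ : ∃ N, μ (B N) ≠ 0 := by
    by_contra! h
    refine NeZero.ne μ (Measure.measure_univ_eq_zero.1 (nonpos_iff_eq_zero.1 ?_))
    calc μ Set.univ ≤ μ (⋃ N, B N) + μ (⋃ N, B N)ᶜ := measure_univ_le_add_compl _
      _ = 0 := by rw [measure_iUnion_null h, hcover, add_zero]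
  obtain ⟨A, hAB, hA, hAeq⟩ := (hB (N + 1)).exists_measurable_subset_ae_eq
  refine ⟨N + 1, N.succ_pos, A, hA, ?_, fun x hx => hAB hx⟩
  have hmono : B N ⊆ B (N + 1) := fun x hx m hm => hx m (by omega)
  rw [measure_congr hAeq]
  exact fun h => hN (measure_mono_null hmono h)

theorem ae_le_of_forall_le_neg_one (hT : Measure.QuasiMeasurePreserving T μ μ) (hg0 : g 0 = 0)
    (hsub : ∀ n m, ∀ᵐ x ∂μ, g (n + m) x ≤ g n (T^[m] x) + g m x)
    {A : Set X} {N : ℕ} (hN : 0 < N) (hAg : ∀ x ∈ A, ∀ m, N ≤ m → g m x ≤ -1)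
    {n : ℕ} (hn : N ≤ n) :
    ∀ᵐ x ∂μ, g n x ≤
      ∑ j ∈ range n, (⋂ i ≤ j, T^[i] ⁻¹' Aᶜ).indicator (fun x => max (g 1 (T^[j] x)) 0) x + 1
        - birkhoffSum T (A.indicator 1) n x / N
        + birkhoffSum T (fun x => max (g 1 x) 0) N (T^[n - N] x) := by
  classical
  have horbit : ∀ᵐ x ∂μ, ∀ p n m,
      g (n + m) (T^[p] x) ≤ g n (T^[m] (T^[p] x)) + g m (T^[p] x) :=
    ae_all_iff.2 fun p => ae_all_iff.2 fun n => ae_all_iff.2 fun m =>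
      (hT.iterate p).ae (hsub n m)
  filter_upwards [horbit] with x hx
  have hblock := block_zero_le (a := fun ℓ p => g ℓ (T^[p] x)) (v := fun p => T^[p] x ∈ A)
    (fun p n m => by simpa [← Function.iterate_add_apply, add_comm] using hx p n m)
    (fun p => by simp [hg0]) hN (fun p hp m hm => hAg _ hp m hm) n
  have hfirst : ∑ j ∈ range n,
      (⋂ i ≤ j, T^[i] ⁻¹' Aᶜ).indicator (fun x => max (g 1 (T^[j] x)) 0) x =
        ∑ j ∈ range n, (if ∀ i ≤ j, T^[i] x ∉ A then max (g 1 (T^[j] x)) 0 else 0) := by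
    simp [Set.indicator_apply]
  have hcount : birkhoffSum T (A.indicator (1 : X → ℝ)) n x = #{j ∈ range n | T^[j] x ∈ A} := by
    simp [birkhoffSum, Set.indicator_apply]
  have htail : birkhoffSum T (fun x => max (g 1 x) 0) N (T^[n - N] x) =
      ∑ j ∈ Ico (n - N) n, max (g 1 (T^[j] x)) 0 := by
    rw [sum_Ico_eq_sum_range, show n - (n - N) = N by omega, birkhoffSum]
    simp [← Function.iterate_add_apply, add_comm]
  simp only [Function.iterate_zero, id] at hblock
  rw [hfirst, hcount, htail]
  linarith

theorem integral_le_of_forall_le_neg_one [IsProbabilityMeasure μ]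
    (hT : MeasurePreserving T μ μ) (hg : ∀ n, Integrable (g n) μ) (hg0 : g 0 = 0)
    (hsub : ∀ n m, ∀ᵐ x ∂μ, g (n + m) x ≤ g n (T^[m] x) + g m x)
    {A : Set X} (hA : MeasurableSet A) {N : ℕ} (hN : 0 < N)
    (hAg : ∀ x ∈ A, ∀ m, N ≤ m → g m x ≤ -1) {n : ℕ} (hn : N ≤ n) :
    ∫ x, g n x ∂μ ≤ ∑ j ∈ range n, ∫ x in ⋂ i ≤ j, T^[i] ⁻¹' Aᶜ, max (g 1 (T^[j] x)) 0 ∂μ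
      + 1 - n * μ.real A / N + N * ∫ x, max (g 1 x) 0 ∂μ := by
  set w : X → ℝ := fun x => max (g 1 x) 0
  have hw : Integrable w μ := (hg 1).pos_part
  set D : ℕ → Set X := fun j => ⋂ i ≤ j, T^[i] ⁻¹' Aᶜ
  have hD : ∀ j, MeasurableSet (D j) := fun j =>
    .iInter fun i => .iInter fun _ => hT.measurable.iterate i hA.compl
  have hχ : Integrable (A.indicator (1 : X → ℝ)) μ := (integrable_const (1 : ℝ)).indicator hA
  have hterm : ∀ j, Integrable ((D j).indicator fun x => w (T^[j] x)) μ := fun j =>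
    ((hT.iterate j).integrable_comp_of_integrable hw).indicator (hD j)
  have hfirstInt : Integrable (fun x => ∑ j ∈ range n, (D j).indicator (fun x => w (T^[j] x)) x)
      μ := integrable_finsetSum _ fun j _ => hterm j
  have hcountInt : Integrable (fun x => birkhoffSum T (A.indicator (1 : X → ℝ)) n x / N) μ :=
    (hT.integrable_birkhoffSum hχ n).div_const _
  have htailInt : Integrable (fun x => birkhoffSum T w N (T^[n - N] x)) μ :=
    (hT.iterate _).integrable_comp_of_integrable (hT.integrable_birkhoffSum hw N)
  have hbound : Integrable (fun x => ∑ j ∈ range n, (D j).indicator (fun x => w (T^[j] x)) x + 1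
      - birkhoffSum T (A.indicator (1 : X → ℝ)) n x / N + birkhoffSum T w N (T^[n - N] x)) μ :=
    ((hfirstInt.add (integrable_const 1)).sub hcountInt).add htailInt
  refine (integral_mono_ae (hg n) hbound
    (ae_le_of_forall_le_neg_one hT.quasiMeasurePreserving hg0 hsub hN hAg hn)).trans_eq ?_
  rw [integral_add _ htailInt, integral_sub _ hcountInt,
    integral_add hfirstInt (integrable_const 1), integral_finsetSum _ fun j _ => hterm j, integral_div, hT.integral_birkhoffSum_s1 hχ,
    (hT.iterate _).integral_comp_of_aestronglyMeasurable_s1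
      (hT.integrable_birkhoffSum hw N).aestronglyMeasurable,
    hT.integral_birkhoffSum_s1 hw]
  · simp only [integral_indicator (hD _), integral_indicator_one hA, integral_const,
      probReal_univ, smul_eq_mul, one_mul, mul_div_assoc]
    rfl
  all_goals fun_prop

theorem eventually_integral_div_le_neg [IsProbabilityMeasure μ] (hT : Ergodic T μ)
    (hg : ∀ n, Integrable (g n) μ) (hg0 : g 0 = 0)
    (hsub : ∀ n m, ∀ᵐ x ∂μ, g (n + m) x ≤ g n (T^[m] x) + g m x)
    (hdiv : ∀ᵐ x ∂μ, Tendsto (fun n => g n x) atTop atBot) :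
    ∃ c > 0, ∀ᶠ n : ℕ in atTop, (∫ x, g n x ∂μ) / n ≤ -c := by
  obtain ⟨N, hN, A, hA, hA0, hAg⟩ :=
    exists_measurableSet_forall_le_neg_one (fun n => (hg n).1) hdiv
  set b : ℕ → ℝ := fun j => ∫ x in ⋂ i ≤ j, T^[i] ⁻¹' Aᶜ, max (g 1 (T^[j] x)) 0 ∂μ
  have hnever : μ (⋂ i, T^[i] ⁻¹' Aᶜ) = 0 := by
    rw [measure_eq_zero_iff_ae_notMem]
    filter_upwards [hT.ae_exists_iterate_mem hA hA0] with x ⟨p, hp⟩ hx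
    exact Set.mem_iInter.1 hx p hp
  have hb : Tendsto b atTop (𝓝 0) := by
    refine hT.toMeasurePreserving.tendsto_setIntegral_comp_iterate (hg 1).pos_part
      (fun x => le_max_right _ _) ?_
    have := tendsto_measure_iInter_le (μ := μ)
      (fun i => (hT.measurable.iterate i hA.compl).nullMeasurableSet) ⟨0, measure_ne_top μ _⟩
    rwa [hnever] at this
  set c := μ.real A / N
  have hc : 0 < c := div_pos (ENNReal.toReal_pos hA0 (measure_ne_top μ A)) (by exact_mod_cast hN)
  have hupper : Tendsto (fun n : ℕ => (n : ℝ)⁻¹ * ∑ j ∈ range n, b j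
      + (1 + N * ∫ x, max (g 1 x) 0 ∂μ) / n - c) atTop (𝓝 (0 + 0 - c)) :=
    (hb.cesaro.add (tendsto_const_div_atTop_nhds_zero_nat _)).sub_const c
  refine ⟨c / 2, half_pos hc, ?_⟩
  filter_upwards [hupper.eventually (eventually_lt_nhds (by linarith : 0 + 0 - c < -(c / 2))),
    eventually_ge_atTop N] with n hlt hn
  have hnpos : (0 : ℝ) < n := by exact_mod_cast hN.trans_le hn
  have : ∫ x, g n x ∂μ ≤ ∑ j ∈ range n, b j + 1 - n * c + N * ∫ x, max (g 1 x) 0 ∂μ := by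
    rw [← mul_div_assoc]
    exact integral_le_of_forall_le_neg_one hT.toMeasurePreserving hg hg0 hsub hA hN hAg hn
  rw [div_le_iff₀ hnpos]
  calc ∫ x, g n x ∂μ ≤ ((n : ℝ)⁻¹ * ∑ j ∈ range n, b j
      + (1 + N * ∫ x, max (g 1 x) 0 ∂μ) / n - c) * n := by
        field_simp
        linarith
    _ ≤ -(c / 2) * n := by gcongr

end ClimenhagaMorris

end

/-- **Climenhaga–Morris lemma.** If `(f n)` is a subadditive sequence of integrable
functions over an ergodic measure-preserving system and `f n x → -∞` a.e., then
`lim (1/n) ∫ f n dμ < 0` (the limit exists in `ℝ ∪ {-∞}`; we express it as a limsup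
in `EReal`). -/
theorem climenhaga_morris {X : Type*} [MeasurableSpace X] {μ : Measure X}
    [IsProbabilityMeasure μ] (T : X → X) (hT : Ergodic T μ)
    (f : ℕ → X → ℝ) (hint : ∀ n, 1 ≤ n → Integrable (f n) μ)
    (hsub : ∀ n m, 1 ≤ n → 1 ≤ m →
      ∀ᵐ x ∂μ, f (n + m) x ≤ f n (T^[m] x) + f m x)
    (hdiv : ∀ᵐ x ∂μ, Tendsto (fun n => f n x) atTop atBot) :
    limsup (fun n : ℕ => (((∫ x, f n x ∂μ) / n : ℝ) : EReal)) atTop < 0 := by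
  set g : ℕ → X → ℝ := fun n => if n = 0 then 0 else f n
  have hgf : ∀ n, 1 ≤ n → g n = f n := fun n hn => if_neg (by omega)
  have hg : ∀ n, Integrable (g n) μ := fun n => by
    rcases Nat.eq_zero_or_pos n with rfl | hn
    · exact integrable_zero X ℝ μ
    · exact hgf n hn ▸ hint n hn
  have hgsub : ∀ n m, ∀ᵐ x ∂μ, g (n + m) x ≤ g n (T^[m] x) + g m x := fun n m => by
    rcases Nat.eq_zero_or_pos n with rfl | hn
    · simp [g]
    rcases Nat.eq_zero_or_pos m with rfl | hm
    · simp [g]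
    simpa only [hgf n hn, hgf m hm, hgf (n + m) (by omega)] using hsub n m hn hm
  have hgdiv : ∀ᵐ x ∂μ, Tendsto (fun n => g n x) atTop atBot := hdiv.mono fun x hx =>
    hx.congr' ((eventually_ge_atTop 1).mono fun n hn => (congrFun (hgf n hn) x).symm)
  obtain ⟨c, hc, hle⟩ :=
    ClimenhagaMorris.eventually_integral_div_le_neg hT hg (if_pos rfl) hgsub hgdiv
  calc limsup (fun n : ℕ => (((∫ x, f n x ∂μ) / n : ℝ) : EReal)) atTop ≤ ((-c : ℝ) : EReal) :=
        limsup_le_of_le (by isBoundedDefault) <| by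
          filter_upwards [hle, eventually_ge_atTop 1] with n hn h1
          rw [← hgf n h1]
          exact_mod_cast hn
    _ < 0 := by exact_mod_cast neg_neg_of_pos hc
end

section
/- Let T be a measure-preserving (not necessarily ergodic) transformation of a probability space (X, F, μ). For E ∈ F define 1_E*(x) = liminf_{n→∞} (1/n) · #{0 ≤ i < n : T^i x ∈ E}. Then for any E ∈ F with μ(E) > 0, one has 1_E*(x) > 0 for μ-a.e. x ∈ E. -/
open MeasureTheory Filter Classical

open Finset

/-! Apply the maximal ergodic theorem to `g = ε - 1_E`: on the set `B_ε` of points at which some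
Birkhoff sum of `g` is positive, `0 ≤ ∫_{B_ε} g = ε μ(B_ε) - μ(B_ε ∩ E)`, so `μ(B_ε ∩ E) ≤ ε`.
A point of `E` whose lower frequency of visits to `E` vanishes lies in every `B_ε`, hence such
points form a null set. -/

section MaximalErgodic

variable {α : Type*} {f : α → α} {g : α → ℝ}

def birkhoffMax (f : α → α) (g : α → ℝ) (n : ℕ) : α → ℝ :=
  (range (n + 1)).sup' nonempty_range_add_one (birkhoffSum f g)

theorem birkhoffMax_apply (f : α → α) (g : α → ℝ) (n : ℕ) (x : α) :
    birkhoffMax f g n x = (range (n + 1)).sup' nonempty_range_add_one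
      (fun k => birkhoffSum f g k x) :=
  Finset.sup'_apply _ _ _

theorem birkhoffSum_le_birkhoffMax {k n : ℕ} (hk : k ≤ n) (x : α) :
    birkhoffSum f g k x ≤ birkhoffMax f g n x := by
  rw [birkhoffMax_apply]
  exact le_sup' (fun k => birkhoffSum f g k x) (mem_range_succ_iff.mpr hk)

theorem birkhoffMax_nonneg (n : ℕ) (x : α) : 0 ≤ birkhoffMax f g n x :=
  birkhoffSum_zero f g x ▸ birkhoffSum_le_birkhoffMax n.zero_le x

theorem exists_birkhoffMax_eq (n : ℕ) (x : α) :
    ∃ k ≤ n, birkhoffMax f g n x = birkhoffSum f g k x := by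
  obtain ⟨k, hk, heq⟩ := exists_mem_eq_sup' nonempty_range_add_one fun k => birkhoffSum f g k x
  exact ⟨k, mem_range_succ_iff.mp hk, (birkhoffMax_apply f g n x).trans heq⟩

theorem birkhoffMax_mono (x : α) : Monotone fun n => birkhoffMax f g n x := fun m _ hmn => by
  obtain ⟨k, hk, heq⟩ := exists_birkhoffMax_eq (f := f) (g := g) m x
  exact heq.trans_le (birkhoffSum_le_birkhoffMax (hk.trans hmn) x)

/-- A positive maximum is attained at some `k ≥ 1`, and `S_k g x = g x + S_{k-1} g (f x)`. -/
theorem birkhoffMax_le_add_birkhoffMax_apply {n : ℕ} {x : α} (hpos : 0 < birkhoffMax f g n x) :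
    birkhoffMax f g n x ≤ g x + birkhoffMax f g n (f x) := by
  obtain ⟨_ | k, hk, heq⟩ := exists_birkhoffMax_eq (f := f) (g := g) n x
  · rw [heq, birkhoffSum_zero] at hpos
    exact absurd hpos (lt_irrefl 0)
  · rw [heq, birkhoffSum_succ']
    exact add_le_add_right (birkhoffSum_le_birkhoffMax (by omega) (f x)) _

variable [MeasurableSpace α] {μ : Measure α}

theorem measurable_birkhoffMax (hf : Measurable f) (hg : Measurable g) (n : ℕ) :
    Measurable (birkhoffMax f g n) :=
  Finset.measurable_range_sup' fun _ _ =>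
    Finset.measurable_sum _ fun i _ => hg.comp (hf.iterate i)

theorem integrable_birkhoffSum (hf : MeasurePreserving f μ μ) (hg : Integrable g μ) (n : ℕ) :
    Integrable (birkhoffSum f g n) μ :=
  integrable_finsetSum _ fun i _ => (hf.iterate i).integrable_comp_of_integrable hg

theorem integrable_birkhoffMax (hf : MeasurePreserving f μ μ) (hgm : Measurable g)
    (hg : Integrable g μ) (n : ℕ) : Integrable (birkhoffMax f g n) μ := by
  refine (integrable_birkhoffSum hf hg.abs n).mono'
    (measurable_birkhoffMax hf.measurable hgm n).aestronglyMeasurable (ae_of_all _ fun x => ?_)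
  obtain ⟨k, hk, heq⟩ := exists_birkhoffMax_eq (f := f) (g := g) n x
  rw [Real.norm_of_nonneg (birkhoffMax_nonneg n x), heq]
  calc birkhoffSum f g k x ≤ birkhoffSum f (fun y => |g y|) k x :=
        sum_le_sum fun i _ => le_abs_self _
    _ ≤ birkhoffSum f (fun y => |g y|) n x :=
        sum_le_sum_of_subset_of_nonneg (range_subset_range.mpr hk) fun i _ _ => abs_nonneg _

/-- Garsia's argument: with `M = birkhoffMax f g n`, on `{0 < M}` one has `g ≥ M - M ∘ f`, and
`M` vanishes off that set while `M ∘ f ≥ 0` has the same integral as `M`. -/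
theorem setIntegral_birkhoffMax_pos_nonneg (hf : MeasurePreserving f μ μ) (hgm : Measurable g)
    (hg : Integrable g μ) (n : ℕ) :
    0 ≤ ∫ x in {x | 0 < birkhoffMax f g n x}, g x ∂μ := by
  set H := birkhoffMax f g n
  have hHm : Measurable H := measurable_birkhoffMax hf.measurable hgm n
  have hH : Integrable H μ := integrable_birkhoffMax hf hgm hg n
  have hHf : Integrable (fun x => H (f x)) μ := hf.integrable_comp_of_integrable hH
  have hM : MeasurableSet {x | 0 < H x} := measurableSet_lt measurable_const hHm
  have h_pointwise : ∫ x in {x | 0 < H x}, (H x - H (f x)) ∂μ ≤ ∫ x in {x | 0 < H x}, g x ∂μ :=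
    setIntegral_mono_on (hH.sub hHf).integrableOn hg.integrableOn hM fun x hx => by
      linarith [birkhoffMax_le_add_birkhoffMax_apply (f := f) (g := g) hx]
  have h_support : ∫ x in {x | 0 < H x}, H x ∂μ = ∫ x, H x ∂μ :=
    setIntegral_eq_integral_of_forall_compl_eq_zero fun x hx =>
      le_antisymm (not_lt.mp hx) (birkhoffMax_nonneg n x)
  have h_comp_le : ∫ x in {x | 0 < H x}, H (f x) ∂μ ≤ ∫ x, H (f x) ∂μ :=
    setIntegral_le_integral hHf (ae_of_all _ fun x => birkhoffMax_nonneg n (f x))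
  have h_invariant : ∫ x, H (f x) ∂μ = ∫ x, H x ∂μ := by
    rw [← integral_map hf.measurable.aemeasurable hHm.aestronglyMeasurable, hf.map_eq]
  rw [integral_sub hH.integrableOn hHf.integrableOn] at h_pointwise
  linarith

theorem setIntegral_exists_birkhoffSum_pos_nonneg (hf : MeasurePreserving f μ μ)
    (hgm : Measurable g) (hg : Integrable g μ) :
    0 ≤ ∫ x in {x | ∃ n, 0 < birkhoffSum f g n x}, g x ∂μ := by
  have hunion : {x | ∃ n, 0 < birkhoffSum f g n x} = ⋃ n, {x | 0 < birkhoffMax f g n x} := by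
    ext x
    simp only [Set.mem_ofPred_eq, Set.mem_iUnion]
    constructor
    · rintro ⟨n, hn⟩
      exact ⟨n, hn.trans_le (birkhoffSum_le_birkhoffMax le_rfl x)⟩
    · rintro ⟨n, hn⟩
      obtain ⟨k, -, heq⟩ := exists_birkhoffMax_eq (f := f) (g := g) n x
      exact ⟨k, heq ▸ hn⟩
  rw [hunion]
  refine ge_of_tendsto' (tendsto_setIntegral_of_monotone
    (fun n => measurableSet_lt measurable_const (measurable_birkhoffMax hf.measurable hgm n))
    (fun m n hmn x (hx : 0 < _) => hx.trans_le (birkhoffMax_mono x hmn)) hg.integrableOn)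
    fun n => setIntegral_birkhoffMax_pos_nonneg hf hgm hg n

end MaximalErgodic

section VisitFrequency

variable {α : Type*} {f : α → α} {E : Set α}

noncomputable def visitCount (f : α → α) (E : Set α) (n : ℕ) (x : α) : ℕ :=
  #{i ∈ range n | f^[i] x ∈ E}

theorem birkhoffSum_indicator_one_s3 {R : Type*} [AddCommMonoidWithOne R] (n : ℕ) (x : α) :
    birkhoffSum f (E.indicator 1) n x = (visitCount f E n x : R) := by
  simp [birkhoffSum, visitCount, Set.indicator_apply, sum_boole]

theorem birkhoffSum_const_sub_indicator_one (ε : ℝ) (n : ℕ) (x : α) :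
    birkhoffSum f (fun y => ε - E.indicator 1 y) n x = ε * n - visitCount f E n x := by
  rw [← birkhoffSum_indicator_one_s3]
  simp [birkhoffSum, sum_sub_distrib, mul_comm]

theorem measureReal_inter_setOf_visitCount_lt_le [MeasurableSpace α] {μ : Measure α}
    [IsFiniteMeasure μ] (hf : MeasurePreserving f μ μ) (hE : MeasurableSet E) (ε : ℝ) :
    μ.real ({x | ∃ n, (visitCount f E n x : ℝ) < ε * n} ∩ E) ≤
      ε * μ.real {x | ∃ n, (visitCount f E n x : ℝ) < ε * n} := by
  set B := {x | ∃ n, (visitCount f E n x : ℝ) < ε * n}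
  have hB : B = {x | ∃ n, 0 < birkhoffSum f (fun y => ε - E.indicator 1 y) n x} := by
    simp only [B, birkhoffSum_const_sub_indicator_one, sub_pos]
  have hind : Integrable (E.indicator (1 : α → ℝ)) μ := (integrable_const 1).indicator hE
  have hmax := setIntegral_exists_birkhoffSum_pos_nonneg (g := fun y => ε - E.indicator 1 y) hf
    (measurable_const.sub (measurable_const.indicator hE)) ((integrable_const ε).sub hind)
  rw [← hB, integral_sub (integrable_const ε) hind.integrableOn,
    setIntegral_const, setIntegral_indicator hE] at hmax
  simp only [Pi.one_apply, setIntegral_const, smul_eq_mul, mul_one] at hmax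
  linarith

theorem visitCount_le (n : ℕ) (x : α) : visitCount f E n x ≤ n :=
  (card_filter_le _ _).trans (card_range n).le

theorem exists_visitCount_lt_mul_of_liminf_nonpos {x : α}
    (h : liminf (fun n : ℕ => (visitCount f E n x : ℝ) / n) atTop ≤ 0) {ε : ℝ} (hε : 0 < ε) :
    ∃ n, (visitCount f E n x : ℝ) < ε * n := by
  have hcobdd : IsCoboundedUnder (· ≥ ·) atTop fun n : ℕ => (visitCount f E n x : ℝ) / n :=
    isCoboundedUnder_ge_of_le atTop (x := 1) fun n =>
      div_le_one_of_le₀ (by exact_mod_cast visitCount_le n x) n.cast_nonneg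
  obtain ⟨n, hlt, hn⟩ := ((frequently_lt_of_liminf_lt hcobdd (h.trans_lt hε)).and_eventually
    (eventually_gt_atTop 0)).exists
  exact ⟨n, (div_lt_iff₀ (by exact_mod_cast hn)).mp hlt⟩

end VisitFrequency

theorem positive_frequency_recurrence_general {X : Type*} [MeasurableSpace X] {μ : Measure X}
    [IsProbabilityMeasure μ] (T : X → X) (hT : MeasurePreserving T μ μ)
    (E : Set X) (hE : MeasurableSet E) :
    ∀ᵐ x ∂(μ.restrict E),
      0 < liminf (fun n : ℕ =>
        (((Finset.range n).filter (fun i => T^[i] x ∈ E)).card : ℝ) / n) atTop := by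
  rw [ae_restrict_iff' hE, ae_iff]
  refine (measureReal_eq_zero_iff).mp <| le_antisymm
    (le_of_forall_gt_imp_ge_of_dense fun ε hε => ?_) measureReal_nonneg
  set B := {x | ∃ n, (visitCount T E n x : ℝ) < ε * n}
  calc _ ≤ μ.real (B ∩ E) := measureReal_mono fun x hx => by
        obtain ⟨hxE, hlim⟩ := Classical.not_imp.mp hx
        exact ⟨exists_visitCount_lt_mul_of_liminf_nonpos (not_lt.mp hlim) hε, hxE⟩
    _ ≤ ε * μ.real B := measureReal_inter_setOf_visitCount_lt_le hT hE ε
    _ ≤ ε := mul_le_of_le_one_right hε.le measureReal_le_one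

/-- Positive-frequency recurrence: for a measure-preserving (not necessarily ergodic)
transformation of a probability space and a set `E` of positive measure, `μ`-a.e. point
of `E` visits `E` with positive lower asymptotic frequency. -/
theorem positive_frequency_recurrence {X : Type*} [MeasurableSpace X] {μ : Measure X}
    [IsProbabilityMeasure μ] (T : X → X) (hT : MeasurePreserving T μ μ)
    (E : Set X) (hE : MeasurableSet E) (hEpos : 0 < μ E) :
    ∀ᵐ x ∂(μ.restrict E),
      0 < liminf (fun n : ℕ =>
        (((Finset.range n).filter (fun i => T^[i] x ∈ E)).card : ℝ) / n) atTop :=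
  positive_frequency_recurrence_general T hT E hE
end
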